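/- arXiv:2507.13159 — 5 statements merged into one kernel-verified Lean document; each statement's English description precedes it below -/
import Mathlib

section
/- For every integer k ≥ 1 and every y ∈ [0,1], the integral ∫₀^∞ (1 - (1 - e^{-(1-y)z})^k) · e^{-yz} dz is at most H_k, the k-th harmonic number ∑_{ℓ=1}^k 1/ℓ. -/
/-!
Write `a = exp (-(1 - y) z)` and `t = exp (-y z)`, both in `[0, 1]`, with `a t = exp (-z)`.
Expanding `1 - (1 - a)^k = a ∑_{i<k} (1 - a)^i` and using `1 - a ≤ 1 - a t` shows that the
integrand is at most its value at `y = 0`, namely `1 - (1 - e^{-z})^k`. The integral of the latter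
is `∑_{i<k} ∫ (1 - e^{-z})^i e^{-z} dz = ∑_{i<k} 1/(i+1) = H_k`, each term having the primitive
`(1 - e^{-z})^{i+1}/(i+1)`.
-/

open Real MeasureTheory Set Filter Topology

section GeomSum

variable {R : Type*} [CommRing R]

lemma one_sub_one_sub_pow_eq_sum (a : R) (k : ℕ) :
    1 - (1 - a) ^ k = ∑ i ∈ Finset.range k, (1 - a) ^ i * a := by
  rw [← mul_neg_geom_sum, sub_sub_cancel, Finset.mul_sum]
  exact Finset.sum_congr rfl fun _ _ => mul_comm _ _

variable [LinearOrder R] [IsStrictOrderedRing R]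

lemma one_sub_one_sub_pow_mul_le {a t : R} (ha₀ : 0 ≤ a) (ha₁ : a ≤ 1) (ht₀ : 0 ≤ t) (ht₁ : t ≤ 1)
    (k : ℕ) : (1 - (1 - a) ^ k) * t ≤ 1 - (1 - a * t) ^ k := by
  rw [one_sub_one_sub_pow_eq_sum, one_sub_one_sub_pow_eq_sum, Finset.sum_mul]
  refine Finset.sum_le_sum fun i _ => ?_
  rw [mul_assoc]
  have hat : a * t ≤ a := mul_le_of_le_one_right ha₀ ht₁
  gcongr

end GeomSum

lemma hasDerivAt_one_sub_exp_neg_pow_succ_div (i : ℕ) (x : ℝ) :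
    HasDerivAt (fun z => (1 - exp (-z)) ^ (i + 1) / (i + 1))
      ((1 - exp (-x)) ^ i * exp (-x)) x := by
  have h := (((hasDerivAt_neg x).exp.const_sub 1).pow (i + 1)).div_const ((i : ℝ) + 1)
  refine h.congr_deriv ?_
  rw [Nat.add_sub_cancel]
  push_cast
  field_simp

lemma tendsto_one_sub_exp_neg_pow_succ_div (i : ℕ) :
    Tendsto (fun z => (1 - exp (-z)) ^ (i + 1) / (i + 1)) atTop (𝓝 (1 / (i + 1))) := by
  simpa using ((tendsto_exp_neg_atTop_nhds_zero.const_sub 1).pow (i + 1)).div_const ((i : ℝ) + 1)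

lemma one_sub_exp_neg_pow_mul_exp_neg_nonneg (i : ℕ) {z : ℝ} (hz : 0 < z) :
    0 ≤ (1 - exp (-z)) ^ i * exp (-z) := by
  have : exp (-z) ≤ 1 := exp_le_one_iff.2 (by linarith)
  have : 0 ≤ 1 - exp (-z) := by linarith
  positivity

lemma integrableOn_one_sub_exp_neg_pow_mul_exp_neg (i : ℕ) :
    IntegrableOn (fun z => (1 - exp (-z)) ^ i * exp (-z)) (Ioi 0) :=
  integrableOn_Ioi_deriv_of_nonneg' (fun x _ => hasDerivAt_one_sub_exp_neg_pow_succ_div i x)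
    (fun _ hz => one_sub_exp_neg_pow_mul_exp_neg_nonneg i hz)
    (tendsto_one_sub_exp_neg_pow_succ_div i)

lemma integral_one_sub_exp_neg_pow_mul_exp_neg (i : ℕ) :
    ∫ z in Ioi 0, (1 - exp (-z)) ^ i * exp (-z) = 1 / (i + 1) := by
  rw [integral_Ioi_of_hasDerivAt_of_nonneg'
    (fun x _ => hasDerivAt_one_sub_exp_neg_pow_succ_div i x)
    (fun _ hz => one_sub_exp_neg_pow_mul_exp_neg_nonneg i hz)
    (tendsto_one_sub_exp_neg_pow_succ_div i)]
  simp

lemma one_sub_one_sub_exp_neg_pow_eq_sum (k : ℕ) :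
    (fun z : ℝ => 1 - (1 - exp (-z)) ^ k) =
      fun z => ∑ i ∈ Finset.range k, (1 - exp (-z)) ^ i * exp (-z) :=
  funext fun z => one_sub_one_sub_pow_eq_sum (exp (-z)) k

lemma integrableOn_one_sub_one_sub_exp_neg_pow (k : ℕ) :
    IntegrableOn (fun z : ℝ => 1 - (1 - exp (-z)) ^ k) (Ioi 0) := by
  rw [one_sub_one_sub_exp_neg_pow_eq_sum]
  exact integrable_finsetSum _ fun i _ => integrableOn_one_sub_exp_neg_pow_mul_exp_neg i

lemma integral_one_sub_one_sub_exp_neg_pow (k : ℕ) :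
    ∫ z in Ioi 0, (1 - (1 - exp (-z)) ^ k) = ∑ ℓ ∈ Finset.Icc 1 k, (1 : ℝ) / ℓ := by
  rw [one_sub_one_sub_exp_neg_pow_eq_sum,
    integral_finsetSum _ fun i _ => integrableOn_one_sub_exp_neg_pow_mul_exp_neg i]
  simp_rw [integral_one_sub_exp_neg_pow_mul_exp_neg]
  rw [Finset.range_eq_Ico, ← Finset.Ico_add_one_right_eq_Icc]
  simpa [add_comm] using Finset.sum_Ico_add' (fun ℓ : ℕ => (1 : ℝ) / ℓ) 0 k 1

theorem harmonic_integral_bound_general (k : ℕ) (y : ℝ) (hy : y ∈ Set.Icc (0:ℝ) 1) :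
    ∫ z in Set.Ioi (0:ℝ), (1 - (1 - Real.exp (-(1 - y) * z)) ^ k) * Real.exp (-y * z)
      ≤ ∑ ℓ ∈ Finset.Icc 1 k, (1 : ℝ) / ℓ := by
  obtain ⟨hy₀, hy₁⟩ := hy
  rw [← integral_one_sub_one_sub_exp_neg_pow k]
  have bounds : ∀ z ∈ Ioi (0 : ℝ), 0 ≤ exp (-(1 - y) * z) ∧ exp (-(1 - y) * z) ≤ 1 ∧
      0 ≤ exp (-y * z) ∧ exp (-y * z) ≤ 1 := fun z hz =>
    ⟨(exp_pos _).le, exp_le_one_iff.2 (by nlinarith [mem_Ioi.1 hz]), (exp_pos _).le,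
      exp_le_one_iff.2 (by nlinarith [mem_Ioi.1 hz])⟩
  refine integral_mono_of_nonneg ?_ (integrableOn_one_sub_one_sub_exp_neg_pow k) ?_
  · filter_upwards [ae_restrict_mem measurableSet_Ioi] with z hz
    obtain ⟨ha₀, ha₁, ht₀, -⟩ := bounds z hz
    exact mul_nonneg (sub_nonneg.2 (pow_le_one₀ (by linarith) (by linarith))) ht₀
  · filter_upwards [ae_restrict_mem measurableSet_Ioi] with z hz
    obtain ⟨ha₀, ha₁, ht₀, ht₁⟩ := bounds z hz
    have key := one_sub_one_sub_pow_mul_le ha₀ ha₁ ht₀ ht₁ k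
    rwa [← exp_add, show -(1 - y) * z + -y * z = -z by ring] at key

theorem harmonic_integral_bound (k : ℕ) (hk : 1 ≤ k) (y : ℝ) (hy : y ∈ Set.Icc (0:ℝ) 1) :
    ∫ z in Set.Ioi (0:ℝ), (1 - (1 - Real.exp (-(1 - y) * z)) ^ k) * Real.exp (-y * z)
      ≤ ∑ ℓ ∈ Finset.Icc 1 k, (1 : ℝ) / ℓ :=
  harmonic_integral_bound_general k y hy
end

section
/- Let α ≥ 1, z ≥ 0, y ∈ [0,1], and define f(z,y,r) = 1 - r^α · e^{-z·max{r/α - y, 0}} for r ∈ [0,1]. Then the minimum of f(z,y,·) over r ∈ [0,1] is attained at r* given by: r* = min{α²/z, 1} if y < min{α/z, 1/α}; r* = αy if α/z ≤ y < 1/α; and r* = 1 if y ≥ 1/α. -/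
/-! Minimising `f` means maximising `g r = r ^ α * exp (-z * max (r / α - y) 0)`. Below `α y`
this is `r ^ α`, which increases; above it, it is `exp (z y) · r ^ α e^{-(z/α) r}`, which increases
up to `α² / z` and decreases afterwards. So `g` increases on `[0, m]` and decreases on `[m, ∞)` for
`m = max (α y) (α² / z)`, its maximum on `[0, 1]` sits at `min m 1`, and the three cases of `r*`
are the three ways of evaluating `min m 1`. -/

open Real Set

theorem isMaxOn_Icc_min_of_monotoneOn_of_antitoneOn {ι β : Type*} [LinearOrder ι] [Preorder β]
    {f : ι → β} {a b m : ι} (ham : a ≤ m) (hab : a ≤ b) (hmono : MonotoneOn f (Icc a m))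
    (hanti : AntitoneOn f (Ici m)) : IsMaxOn f (Icc a b) (min m b) := by
  intro r hr
  rcases le_total m b with hmb | hbm
  · rw [min_eq_left hmb]
    rcases le_total r m with hrm | hmr
    · exact hmono ⟨hr.1, hrm⟩ ⟨ham, le_rfl⟩ hrm
    · exact hanti (le_refl m) hmr hmr
  · rw [min_eq_right hbm]
    exact hmono ⟨hr.1, hr.2.trans hbm⟩ ⟨hab, hbm⟩ hr.2

section RpowMulExp

variable {α c : ℝ}

theorem hasDerivAt_rpow_mul_exp {s : ℝ} (hs : s ≠ 0) :
    HasDerivAt (fun t => t ^ α * exp (-c * t)) (s ^ (α - 1) * (α - c * s) * exp (-c * s)) s := by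
  have hexp : HasDerivAt (fun t => exp (-c * t)) (exp (-c * s) * -c) s := by
    simpa using ((hasDerivAt_id s).const_mul (-c)).exp
  refine ((hasDerivAt_rpow_const (p := α) (Or.inl hs)).mul hexp).congr_deriv ?_
  rw [rpow_sub_one hs]
  field_simp
  ring

theorem continuous_rpow_mul_exp (hα : 0 ≤ α) : Continuous fun t => t ^ α * exp (-c * t) :=
  (continuous_rpow_const hα).mul (by fun_prop)

theorem monotoneOn_rpow_mul_exp (hα : 0 ≤ α) (hc : 0 < c) :
    MonotoneOn (fun t => t ^ α * exp (-c * t)) (Icc 0 (α / c)) := by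
  refine monotoneOn_of_hasDerivWithinAt_nonneg (convex_Icc _ _)
    (continuous_rpow_mul_exp hα).continuousOn
    (fun s hs => (hasDerivAt_rpow_mul_exp (s := s) ?_).hasDerivWithinAt)
    (fun s hs => ?_)
  · rw [interior_Icc] at hs
    exact hs.1.ne'
  rw [interior_Icc] at hs
  have hcs : c * s ≤ α := (le_div_iff₀' hc).mp hs.2.le
  exact mul_nonneg (mul_nonneg (rpow_nonneg hs.1.le _) (sub_nonneg.mpr hcs)) (exp_pos _).le

theorem antitoneOn_rpow_mul_exp (hα : 0 ≤ α) (hc : 0 < c) :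
    AntitoneOn (fun t => t ^ α * exp (-c * t)) (Ici (α / c)) := by
  refine antitoneOn_of_hasDerivWithinAt_nonpos (convex_Ici _)
    (continuous_rpow_mul_exp hα).continuousOn
    (fun s hs => (hasDerivAt_rpow_mul_exp ?_).hasDerivWithinAt) (fun s hs => ?_)
  · rw [interior_Ici] at hs
    exact ((div_nonneg hα hc.le).trans_lt hs).ne'
  rw [interior_Ici] at hs
  have hcs : α ≤ c * s := (div_le_iff₀' hc).mp hs.le
  have hs₀ : 0 ≤ s := (div_nonneg hα hc.le).trans hs.le
  exact mul_nonpos_of_nonpos_of_nonneg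
    (mul_nonpos_of_nonneg_of_nonpos (rpow_nonneg hs₀ _) (sub_nonpos.mpr hcs)) (exp_pos _).le

end RpowMulExp

noncomputable def dampedPow (α z y r : ℝ) : ℝ :=
  r ^ α * exp (-z * max (r / α - y) 0)

section DampedPow

variable {α z y : ℝ}

theorem dampedPow_zero_left (α y r : ℝ) : dampedPow α 0 y r = r ^ α := by
  simp [dampedPow]

theorem dampedPow_of_le (hα : 0 < α) {r : ℝ} (hr : r ≤ α * y) : dampedPow α z y r = r ^ α := by
  have : r / α - y ≤ 0 := by rw [sub_nonpos, div_le_iff₀' hα]; exact hr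
  simp [dampedPow, max_eq_right this]

theorem dampedPow_of_ge (hα : 0 < α) {r : ℝ} (hr : α * y ≤ r) :
    dampedPow α z y r = exp (z * y) * (r ^ α * exp (-(z / α) * r)) := by
  have : 0 ≤ r / α - y := by rw [sub_nonneg, le_div_iff₀' hα]; exact hr
  rw [dampedPow, max_eq_left this, mul_left_comm, ← exp_add]
  congr 2
  ring

theorem monotoneOn_dampedPow (hα : 0 < α) (hz : 0 < z) (hy : 0 ≤ y) :
    MonotoneOn (dampedPow α z y) (Icc 0 (max (α * y) (α ^ 2 / z))) := by
  have hpow : MonotoneOn (dampedPow α z y) (Icc 0 (α * y)) := fun r hr s hs hrs => by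
    rw [dampedPow_of_le hα hr.2, dampedPow_of_le hα hs.2]
    exact rpow_le_rpow hr.1 hrs hα.le
  rcases le_total (α ^ 2 / z) (α * y) with hpeak | hpeak
  · rwa [max_eq_left hpeak]
  have hmono := monotoneOn_rpow_mul_exp (α := α) (c := z / α) hα.le (by positivity)
  rw [show α / (z / α) = α ^ 2 / z by field_simp] at hmono
  have hαy : 0 ≤ α * y := by positivity
  have hexp : MonotoneOn (dampedPow α z y) (Icc (α * y) (α ^ 2 / z)) := fun r hr s hs hrs => by
    rw [dampedPow_of_ge hα hr.1, dampedPow_of_ge hα hs.1]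
    exact mul_le_mul_of_nonneg_left
      (hmono ⟨hαy.trans hr.1, hr.2⟩ ⟨hαy.trans hs.1, hs.2⟩ hrs) (exp_pos _).le
  rw [max_eq_right hpeak, ← Icc_union_Icc_eq_Icc hαy hpeak]
  exact hpow.union_right hexp (isGreatest_Icc hαy) (isLeast_Icc hpeak)

theorem antitoneOn_dampedPow (hα : 0 < α) (hz : 0 < z) :
    AntitoneOn (dampedPow α z y) (Ici (max (α * y) (α ^ 2 / z))) := by
  have hanti := antitoneOn_rpow_mul_exp (α := α) (c := z / α) hα.le (by positivity)
  rw [show α / (z / α) = α ^ 2 / z by field_simp] at hanti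
  intro r hr s hs hrs
  rw [mem_Ici, max_le_iff] at hr hs
  obtain ⟨hyr, hpeak_r⟩ := hr
  obtain ⟨hys, hpeak_s⟩ := hs
  rw [dampedPow_of_ge hα hyr, dampedPow_of_ge hα hys]
  exact mul_le_mul_of_nonneg_left (hanti hpeak_r hpeak_s hrs) (exp_pos _).le

end DampedPow

theorem ite_eq_min_max_one {α z y : ℝ} (hα : 0 < α) :
    (if y < min (α / z) (1 / α) then min (α ^ 2 / z) 1
      else if y < 1 / α then α * y
      else 1) = min (max (α * y) (α ^ 2 / z)) 1 := by
  have hpeak : α * y < α ^ 2 / z ↔ y < α / z := by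
    rw [show α ^ 2 / z = α * (α / z) by ring, mul_lt_mul_iff_right₀ hα]
  have hone : α * y < 1 ↔ y < 1 / α := by rw [lt_div_iff₀' hα]
  split_ifs with h₁ h₂
  · rw [max_eq_right (hpeak.mpr (lt_min_iff.mp h₁).1).le]
  · have : α ^ 2 / z ≤ α * y := not_lt.mp fun h => h₁ (lt_min (hpeak.mp h) h₂)
    rw [max_eq_left this, min_eq_left (hone.mpr h₂).le]
  · exact (min_eq_right ((not_lt.mp (mt hone.mp h₂)).trans (le_max_left _ _))).symm

theorem min_of_f_attained (α : ℝ) (hα : 1 ≤ α) (z : ℝ) (hz : 0 ≤ z)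
    (y : ℝ) (hy : y ∈ Set.Icc (0:ℝ) 1)
    (f : ℝ → ℝ) (hf : ∀ r, f r = 1 - r ^ α * Real.exp (-z * max (r / α - y) 0))
    (rstar : ℝ)
    (hrstar : rstar = if z = 0 then 1
      else if y < min (α / z) (1 / α) then min (α ^ 2 / z) 1
      else if y < 1 / α then α * y
      else 1) :
    rstar ∈ Set.Icc (0:ℝ) 1 ∧ ∀ r ∈ Set.Icc (0:ℝ) 1, f rstar ≤ f r := by
  have hα₀ : 0 < α := zero_lt_one.trans_le hα
  obtain ⟨hmem, hmax⟩ : rstar ∈ Icc 0 1 ∧ IsMaxOn (dampedPow α z y) (Icc 0 1) rstar := by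
    rcases hz.eq_or_lt with rfl | hz₀
    · rw [if_pos rfl] at hrstar
      subst hrstar
      refine ⟨right_mem_Icc.mpr zero_le_one, fun r hr => ?_⟩
      show dampedPow α 0 y r ≤ dampedPow α 0 y 1
      rw [dampedPow_zero_left, dampedPow_zero_left, one_rpow]
      exact rpow_le_one hr.1 hr.2 hα₀.le
    · rw [if_neg hz₀.ne', ite_eq_min_max_one hα₀] at hrstar
      subst hrstar
      have hm : 0 ≤ max (α * y) (α ^ 2 / z) := le_max_of_le_right (by positivity)
      exact ⟨⟨le_min hm zero_le_one, min_le_right _ _⟩,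
        isMaxOn_Icc_min_of_monotoneOn_of_antitoneOn hm zero_le_one
          (monotoneOn_dampedPow hα₀ hz₀ hy.1) (antitoneOn_dampedPow hα₀ hz₀)⟩
  refine ⟨hmem, fun r hr => ?_⟩
  rw [hf, hf]
  exact sub_le_sub_left (hmax hr) 1
end

section
/- Let α ≥ 1 and z ≥ 0. Define f(z,y,r) = 1 - r^α · e^{-z·max{r/α - y, 0}} and let r*(z,y) be the minimizer of f(z,y,·) on [0,1]. Then for every integer k ≥ 1 and every y ∈ [0,1], (1 - (f(z, y, r*(z,y)))^k) · e^{-yz} ≤ 1 - (f(z, 0, r*(z,0)))^k. -/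
open Real

private lemma rpow_le_exp_aux (a x : ℝ) (hx : 0 ≤ x) (ha : 0 < a) :
    x ^ a ≤ Real.exp (a * (x - 1)) := by
  rcases eq_or_lt_of_le hx with h | h
  · rw [← h, Real.zero_rpow (ne_of_gt ha)]
    exact (Real.exp_pos _).le
  · rw [Real.rpow_def_of_pos h]
    apply Real.exp_le_exp.mpr
    have := Real.log_le_sub_one_of_pos h
    nlinarith

private lemma gmax (α z : ℝ) (hα : 1 ≤ α) (hz : 0 ≤ z) (r : ℝ)
    (hr0 : 0 ≤ r) (hr1 : r ≤ 1) :
    r ^ α * Real.exp (-(z * r / α)) ≤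
      (if z = 0 then (1:ℝ) else min (α ^ 2 / z) 1) ^ α *
        Real.exp (-(z * (if z = 0 then (1:ℝ) else min (α ^ 2 / z) 1) / α)) := by
  have hαpos : (0:ℝ) < α := lt_of_lt_of_le one_pos hα
  set c : ℝ := if z = 0 then (1:ℝ) else min (α ^ 2 / z) 1 with hc
  have hcpos : 0 < c := by
    rw [hc]; split
    · exact one_pos
    · rename_i hzne
      have hzpos : 0 < z := lt_of_le_of_ne hz (Ne.symm hzne)
      exact lt_min (div_pos (by positivity) hzpos) one_pos
  have hL1 := rpow_le_exp_aux α (r / c) (div_nonneg hr0 hcpos.le) hαpos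
  have hE : α * (r / c - 1) - z * r / α ≤ -(z * c / α) := by
    rw [hc]
    split
    · rename_i hz0
      subst hz0
      simp only [zero_mul, zero_div, neg_zero, sub_zero, div_one]
      nlinarith
    · rename_i hzne
      have hzpos : 0 < z := lt_of_le_of_ne hz (Ne.symm hzne)
      rcases le_or_gt (α ^ 2 / z) 1 with h1 | h1
      · rw [min_eq_left h1]
        have heq : α * (r / (α ^ 2 / z) - 1) - z * r / α = -(z * (α ^ 2 / z) / α) := by
          field_simp
          ring
        exact le_of_eq heq
      · rw [min_eq_right h1.le]
        have hzlt : z < α ^ 2 := by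
          by_contra hcon
          push_neg at hcon
          exact absurd ((div_le_one hzpos).mpr hcon) (not_le.mpr h1)
        have hzα : z / α ≤ α := by
          rw [div_le_iff₀ hαpos]; nlinarith
        have h2 : (r - 1) * (α - z / α) ≤ 0 :=
          mul_nonpos_of_nonpos_of_nonneg (by linarith) (by linarith)
        have h3 : α * (r / 1 - 1) - z * r / α + z * 1 / α = (r - 1) * (α - z / α) := by
          field_simp; ring
        linarith
  have hrc : r ^ α = c ^ α * (r / c) ^ α := by
    rw [Real.div_rpow hr0 hcpos.le]
    have : c ^ α ≠ 0 := by positivity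
    field_simp
  calc r ^ α * Real.exp (-(z * r / α))
      = c ^ α * ((r / c) ^ α * Real.exp (-(z * r / α))) := by rw [hrc]; ring
    _ ≤ c ^ α * (Real.exp (α * (r / c - 1)) * Real.exp (-(z * r / α))) := by
        apply mul_le_mul_of_nonneg_left _ (Real.rpow_nonneg hcpos.le α)
        exact mul_le_mul_of_nonneg_right hL1 (Real.exp_pos _).le
    _ = c ^ α * Real.exp (α * (r / c - 1) + -(z * r / α)) := by
        rw [← Real.exp_add]
    _ ≤ c ^ α * Real.exp (-(z * c / α)) := by
        apply mul_le_mul_of_nonneg_left _ (Real.rpow_nonneg hcpos.le α)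
        apply Real.exp_le_exp.mpr
        linarith

set_option maxHeartbeats 1000000 in
theorem f_rstar_bound (α : ℝ) (hα : 1 ≤ α) (z : ℝ) (hz : 0 ≤ z)
    (f : ℝ → ℝ → ℝ)
    (hf : ∀ y r, f y r = 1 - r ^ α * Real.exp (-z * max (r / α - y) 0))
    (rstar : ℝ → ℝ)
    (hrstar : ∀ y, rstar y = if z = 0 then 1
      else if y < min (α / z) (1 / α) then min (α ^ 2 / z) 1
      else if y < 1 / α then α * y
      else 1)
    (k : ℕ) (hk : 1 ≤ k) (y : ℝ) (hy : y ∈ Set.Icc (0:ℝ) 1) :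
    (1 - (f y (rstar y)) ^ k) * Real.exp (-y * z) ≤ 1 - (f 0 (rstar 0)) ^ k := by
  obtain ⟨hy0, hy1⟩ := hy
  have hαpos : (0:ℝ) < α := lt_of_lt_of_le one_pos hα
  set t : ℝ := Real.exp (-y * z) with ht
  have htpos : 0 < t := Real.exp_pos _
  set ry : ℝ := rstar y with hry
  set r0 : ℝ := rstar 0 with hr0
  have hr0eq : r0 = if z = 0 then (1:ℝ) else min (α ^ 2 / z) 1 := by
    rw [hr0, hrstar 0]
    split
    · rfl
    · rename_i hzne
      have hzpos : 0 < z := lt_of_le_of_ne hz (Ne.symm hzne)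
      rw [if_pos (lt_min (div_pos hαpos hzpos) (div_pos one_pos hαpos))]
  have hrymem : 0 ≤ ry ∧ ry ≤ 1 := by
    rw [hry, hrstar y]
    split
    · exact ⟨zero_le_one, le_refl 1⟩
    · rename_i hzne
      have hzpos : 0 < z := lt_of_le_of_ne hz (Ne.symm hzne)
      split
      · exact ⟨le_min (by positivity) zero_le_one, min_le_right _ _⟩
      · split
        · rename_i h1 h2
          refine ⟨by positivity, ?_⟩
          have h3 : α * y < α * (1 / α) := mul_lt_mul_of_pos_left h2 hαpos
          rw [mul_one_div, div_self (ne_of_gt hαpos)] at h3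
          exact h3.le
        · exact ⟨zero_le_one, le_refl 1⟩
  obtain ⟨hry0, hry1⟩ := hrymem
  have hr0mem : 0 ≤ r0 ∧ r0 ≤ 1 := by
    rw [hr0eq]
    split
    · exact ⟨zero_le_one, le_refl 1⟩
    · rename_i hzne
      have hzpos : 0 < z := lt_of_le_of_ne hz (Ne.symm hzne)
      exact ⟨le_min (by positivity) zero_le_one, min_le_right _ _⟩
  obtain ⟨h00, h01⟩ := hr0mem
  have hfy : f y ry = 1 - ry ^ α * Real.exp (-z * max (ry / α - y) 0) := hf y ry
  have hf0 : f 0 r0 = 1 - r0 ^ α * Real.exp (-(z * r0 / α)) := by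
    rw [hf 0 r0]
    congr 3
    rw [sub_zero, max_eq_left (div_nonneg h00 hαpos.le)]
    ring
  set A : ℝ := f y ry with hA
  set B : ℝ := f 0 r0 with hB
  have hMy : (0:ℝ) ≤ max (ry / α - y) 0 := le_max_right _ _
  have hA1 : A ≤ 1 := by
    rw [hfy]
    nlinarith [Real.rpow_nonneg hry0 α, (Real.exp_pos (-z * max (ry / α - y) 0)).le,
      mul_nonneg (Real.rpow_nonneg hry0 α) (Real.exp_pos (-z * max (ry / α - y) 0)).le]
  have hA0 : 0 ≤ A := by
    rw [hfy]
    have h1 : ry ^ α ≤ 1 := Real.rpow_le_one hry0 hry1 hαpos.le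
    have h2 : Real.exp (-z * max (ry / α - y) 0) ≤ 1 := by
      apply Real.exp_le_one_iff.mpr
      nlinarith
    nlinarith [Real.rpow_nonneg hry0 α, (Real.exp_pos (-z * max (ry / α - y) 0)).le]
  have hB0 : 0 ≤ B := by
    rw [hf0]
    have h1 : r0 ^ α ≤ 1 := Real.rpow_le_one h00 h01 hαpos.le
    have h2 : Real.exp (-(z * r0 / α)) ≤ 1 := by
      apply Real.exp_le_one_iff.mpr
      have : 0 ≤ z * r0 / α := by positivity
      linarith
    nlinarith [Real.rpow_nonneg h00 α, (Real.exp_pos (-(z * r0 / α))).le]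
  -- key inequality
  have hkey : t * (1 - A) ≤ 1 - B := by
    rw [hfy, hf0]
    have h1 : t * (1 - (1 - ry ^ α * Real.exp (-z * max (ry / α - y) 0)))
        = ry ^ α * Real.exp (-z * max (ry / α - y) 0 + -y * z) := by
      rw [Real.exp_add, ht]; ring
    rw [h1]
    have h2 : -z * max (ry / α - y) 0 + -y * z ≤ -(z * ry / α) := by
      have h3 : ry / α - y ≤ max (ry / α - y) 0 := le_max_left _ _
      have h4 : z * (ry / α - y) ≤ z * max (ry / α - y) 0 :=
        mul_le_mul_of_nonneg_left h3 hz
      have h5 : z * (ry / α - y) = z * ry / α - y * z := by ring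
      linarith
    have h4 : ry ^ α * Real.exp (-z * max (ry / α - y) 0 + -y * z)
        ≤ ry ^ α * Real.exp (-(z * ry / α)) :=
      mul_le_mul_of_nonneg_left (Real.exp_le_exp.mpr h2) (Real.rpow_nonneg hry0 α)
    have h5 := gmax α z hα hz ry hry0 hry1
    rw [← hr0eq] at h5
    linarith
  -- convexity step
  have hconv := (convexOn_pow k).2 (Set.mem_Ici.mpr zero_le_one) (Set.mem_Ici.mpr hA0)
    (by linarith [Real.exp_le_one_iff.mpr (show -y * z ≤ 0 by nlinarith)] : (0:ℝ) ≤ 1 - t)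
    htpos.le (by ring)
  simp only [smul_eq_mul, mul_one, one_pow] at hconv
  have hBle : B ≤ (1 - t) + t * A := by nlinarith
  have hBk : B ^ k ≤ ((1 - t) + t * A) ^ k := pow_le_pow_left₀ hB0 hBle k
  have hfin : B ^ k ≤ (1 - t) + t * A ^ k := hBk.trans hconv
  nlinarith [hfin]
end

section
/- Let α ≥ 2 and let k ≥ 1 be an integer with α ≥ ln k. Then ∫_{1-e^{-α}}^{1} (1 - t^k)/(1 - t)^{1 + 1/α} dt ≤ (7e/3) · ∫_{1-e^{-α}}^{1} (1 - t^k)/(1 - t) dt. -/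
/-!
Write `p(t) = 1 + t + ⋯ + t^{k-1} = (1 - t^k)/(1 - t)`, so the left integrand is `p(t) w(t)` with
weight `w(t) = (1 - t)^{-1/α}`. With `ε = e^{-α}` the weight is at least `ε^{-1/α} = e` on the
interval, while `p ≤ k`; hence `(k - p)(w - e) ≥ 0` bounds `∫ p w` by `e ∫ p + k ∫ (w - e)`, and
the remainder `k ∫ (w - e) = k e ε / (α - 1)` is at most `e k ε`. Finally `k ε ≤ 1` because
`log k ≤ α`, and then Bernoulli's inequality gives `∫ p ≥ (3/4) k ε`; the constant is
`e + (4/3) e = 7e/3`.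
-/

open Real Set intervalIntegral
open scoped Interval

lemma geom_sum_le_card {t : ℝ} (h0 : 0 ≤ t) (h1 : t ≤ 1) (k : ℕ) :
    ∑ i ∈ Finset.range k, t ^ i ≤ k :=
  (Finset.sum_le_sum fun i _ => pow_le_one₀ (n := i) h0 h1).trans_eq (by simp)

lemma card_sub_le_geom_sum {t : ℝ} (ht : -1 ≤ t) (k : ℕ) :
    k - k * (k - 1) / 2 * (1 - t) ≤ ∑ i ∈ Finset.range k, t ^ i := by
  induction k with
  | zero => simp
  | succ k ih =>
    rw [Finset.sum_range_succ]
    push_cast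
    linarith [one_add_mul_sub_le_pow ht k]

lemma one_sub_pow_div_one_sub {t : ℝ} (ht : t ≠ 1) (k : ℕ) :
    (1 - t ^ k) / (1 - t) = ∑ i ∈ Finset.range k, t ^ i := by
  rw [geom_sum_eq ht, ← neg_sub, ← neg_sub t, neg_div_neg_eq]

lemma one_sub_pow_div_rpow_one_add {t : ℝ} (ht : t < 1) (k : ℕ) (s : ℝ) :
    (1 - t ^ k) / (1 - t) ^ (1 + s) = (∑ i ∈ Finset.range k, t ^ i) * (1 - t) ^ (-s) := by
  have h : 0 < 1 - t := sub_pos.2 ht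
  rw [← geom_sum_mul_neg, rpow_add h, rpow_one, rpow_neg h.le]
  field_simp

lemma intervalIntegrable_sub_rpow {r : ℝ} (hr : -1 < r) (a b c : ℝ) :
    IntervalIntegrable (fun t => (c - t) ^ r) MeasureTheory.volume a b := by
  simpa using (intervalIntegrable_rpow' hr (a := c - a) (b := c - b)).comp_sub_left c

lemma integral_sub_rpow {r : ℝ} (hr : -1 < r) (a ε : ℝ) :
    ∫ t in (a - ε)..a, (a - t) ^ r = ε ^ (r + 1) / (r + 1) := by
  rw [integral_comp_sub_left (fun u => u ^ r), sub_self, sub_sub_cancel,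
    integral_rpow (Or.inl hr), zero_rpow (by linarith), sub_zero]

/-- The remainder term is `K ∫ ((1 - t)^{-s} - ε^{-s}) = K ε^{1-s} s / (1 - s)`. -/
lemma integral_mul_one_sub_rpow_neg_le {f : ℝ → ℝ} {K ε s : ℝ} (hε : 0 < ε) (hs0 : 0 ≤ s)
    (hs1 : s < 1) (hf : ContinuousOn f [[1 - ε, 1]]) (hfK : ∀ t ∈ Ioo (1 - ε) 1, f t ≤ K) :
    ∫ t in (1 - ε)..1, f t * (1 - t) ^ (-s)
      ≤ ε ^ (-s) * (∫ t in (1 - ε)..1, f t) + K * (ε ^ (1 - s) * s / (1 - s)) := by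
  have hw : IntervalIntegrable (fun t => (1 - t) ^ (-s)) MeasureTheory.volume (1 - ε) 1 :=
    intervalIntegrable_sub_rpow (by linarith) _ _ _
  have hfi : IntervalIntegrable f MeasureTheory.volume (1 - ε) 1 := hf.intervalIntegrable
  have hbound : ∫ t in (1 - ε)..1, f t * (1 - t) ^ (-s)
      ≤ ∫ t in (1 - ε)..1, (ε ^ (-s) * f t + K * ((1 - t) ^ (-s) - ε ^ (-s))) := by
    refine integral_mono_on_of_le_Ioo (by linarith) (hw.continuousOn_mul hf)
      ((hfi.const_mul _).add ((hw.sub intervalIntegrable_const).const_mul _)) fun t ht => ?_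
    have hwt : ε ^ (-s) ≤ (1 - t) ^ (-s) :=
      rpow_le_rpow_of_nonpos (by linarith [ht.2]) (by linarith [ht.1]) (by linarith)
    nlinarith [mul_nonneg (sub_nonneg.2 (hfK t ht)) (sub_nonneg.2 hwt)]
  have hεs : ε ^ (-s) * ε = ε ^ (1 - s) := by
    rw [sub_eq_neg_add, rpow_add hε, rpow_one]
  have hwint := integral_sub_rpow (r := -s) (by linarith) 1 ε
  rw [integral_add (hfi.const_mul _) ((hw.sub intervalIntegrable_const).const_mul _),
    integral_const_mul, integral_const_mul, integral_sub hw intervalIntegrable_const,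
    integral_const, hwint, smul_eq_mul, sub_sub_cancel, mul_comm ε, hεs,
    neg_add_eq_sub] at hbound
  have hremainder : ε ^ (1 - s) / (1 - s) - ε ^ (1 - s) = ε ^ (1 - s) * s / (1 - s) := by
    field_simp [(by linarith : (1 - s) ≠ 0)]
    ring
  rwa [hremainder] at hbound

lemma three_quarters_mul_le_integral_geom_sum {k : ℕ} {ε : ℝ} (hε0 : 0 ≤ ε) (hε2 : ε ≤ 2)
    (hkε : k * ε ≤ 1) :
    3 / 4 * (k * ε) ≤ ∫ t in (1 - ε)..1, ∑ i ∈ Finset.range k, t ^ i := by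
  have hkε' : (k - 1) * ε ≤ 1 := by nlinarith
  calc 3 / 4 * (k * ε) ≤ k * ε - k * (k - 1) / 2 * (ε ^ 2 / 2) := by
        nlinarith [mul_nonneg (mul_nonneg k.cast_nonneg hε0) (sub_nonneg.2 hkε')]
    _ = ∫ t in (1 - ε)..1, (k - k * (k - 1) / 2 * (1 - t) : ℝ) := by
        rw [integral_sub intervalIntegrable_const
            ((by fun_prop : Continuous _).intervalIntegrable _ _), integral_const_mul,
          integral_comp_sub_left (fun u => u), integral_id, integral_const, smul_eq_mul,
          sub_sub_cancel, sub_self]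
        ring
    _ ≤ ∫ t in (1 - ε)..1, ∑ i ∈ Finset.range k, t ^ i :=
        integral_mono_on (by linarith) ((by fun_prop : Continuous _).intervalIntegrable _ _)
          ((by fun_prop : Continuous _).intervalIntegrable _ _) fun t ht =>
          card_sub_le_geom_sum (by linarith [ht.1]) k

theorem second_integral_bound_general (α : ℝ) (hα2 : 2 ≤ α) (k : ℕ)
    (hαk : Real.log k ≤ α) :
    ∫ t in (1 - Real.exp (-α))..1, (1 - t ^ k) / (1 - t) ^ (1 + 1 / α : ℝ)
      ≤ (7 * Real.exp 1 / 3) * ∫ t in (1 - Real.exp (-α))..1, (1 - t ^ k) / (1 - t) := by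
  set ε := exp (-α)
  have hε0 : 0 < ε := exp_pos _
  have hε1 : ε ≤ 1 := exp_le_one_iff.2 (by linarith)
  have hkε : k * ε ≤ 1 :=
    calc k * ε ≤ exp α * exp (-α) := by gcongr; exact (le_exp_log k).trans (exp_le_exp.2 hαk)
      _ = 1 := by rw [← exp_add, add_neg_cancel, exp_zero]
  have hweight : ε ^ (-(1 / α)) = exp 1 := by
    rw [← exp_mul]; field_simp
  have hremainder : ε ^ (1 - 1 / α) * (1 / α) / (1 - 1 / α) ≤ exp 1 * ε := by
    have hpow : ε ^ (1 - 1 / α) = exp 1 * ε := by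
      rw [← exp_mul, ← exp_add]; congr 1; field_simp; ring
    rw [hpow, mul_div_assoc]
    refine mul_le_of_le_one_right (by positivity) ?_
    have hα : 1 / α ≤ 1 / 2 := one_div_le_one_div_of_le two_pos hα2
    rw [div_le_one (by linarith)]; linarith
  rw [integral_congr_Ioo_of_le (by linarith) fun t ht => one_sub_pow_div_rpow_one_add ht.2 k _,
    integral_congr_Ioo_of_le (by linarith) fun t ht => one_sub_pow_div_one_sub ht.2.ne k]
  have hsplit := integral_mul_one_sub_rpow_neg_le (K := k) (s := 1 / α) hε0 (by positivity)
    (by bound) (by fun_prop) fun t ht => geom_sum_le_card (by linarith [ht.1]) ht.2.le k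
  have hlower := three_quarters_mul_le_integral_geom_sum (k := k) hε0.le (by linarith) hkε
  rw [hweight] at hsplit
  linarith [mul_le_mul_of_nonneg_left hremainder k.cast_nonneg,
    mul_le_mul_of_nonneg_left hlower (exp_pos 1).le]

theorem second_integral_bound (α : ℝ) (hα2 : 2 ≤ α) (k : ℕ) (hk : 1 ≤ k)
    (hαk : Real.log k ≤ α) :
    ∫ t in (1 - Real.exp (-α))..1, (1 - t ^ k) / (1 - t) ^ (1 + 1 / α : ℝ)
      ≤ (7 * Real.exp 1 / 3) * ∫ t in (1 - Real.exp (-α))..1, (1 - t ^ k) / (1 - t) :=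
  second_integral_bound_general α hα2 k hαk
end

section
/- Let α ≥ 1, let ℓ ≥ 0 be an integer, let x₁, …, x_ℓ ∈ [0,1) with partial remainders r_i = 1 - ∑_{j<i} x_j satisfying r_i > 0 for all i = 1,…,ℓ+1. Suppose a sequence of independent events is defined where event i fails with probability min{max{(r_i/α - x_i)/(r_i/α), 0}, 1} (i.e., the chance an exponential clock of rate x_i does not beat an independent exponential clock of rate r_i/α - x_i when x_i < r_i/α, and 0 otherwise). Then the probability that all ℓ events fail (i.e., an element stays 'uncovered' through all ℓ arrivals) is at most (r_{ℓ+1})^α. -/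
/-!
With `t = x_i / r_i`, Bernoulli's inequality `max (1 - α t) 0 ≤ (1 - t) ^ α` bounds the `i`-th
failure probability by `(r_{i+1} / r_i) ^ α`, and these ratios telescope to `r_ℓ ^ α` since
`r_0 = 1`.
-/

open Real

lemma max_one_sub_mul_zero_le_one_sub_rpow {α t : ℝ} (hα : 1 ≤ α) (ht : t ≤ 1) :
    max (1 - α * t) 0 ≤ (1 - t) ^ α := by
  refine max_le ?_ (rpow_nonneg (by linarith) α)
  simpa [sub_eq_add_neg] using one_add_mul_self_le_rpow_one_add (by linarith : -1 ≤ -t) hα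

lemma rpow_mul_clock_failure_le {α r x : ℝ} (hα : 1 ≤ α) (hr : 0 < r) (hxr : x ≤ r) :
    r ^ α * min (max ((r / α - x) / (r / α)) 0) 1 ≤ (r - x) ^ α := by
  have hfail : (r / α - x) / (r / α) = 1 - α * (x / r) := by
    field_simp [(by linarith : α ≠ 0)]
  have hxr' : x / r ≤ 1 := (div_le_one hr).2 hxr
  calc r ^ α * min (max ((r / α - x) / (r / α)) 0) 1
      ≤ r ^ α * (1 - x / r) ^ α := by
        gcongr
        rw [hfail]
        exact (min_le_left _ _).trans (max_one_sub_mul_zero_le_one_sub_rpow hα hxr')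
    _ = (r - x) ^ α := by
        rw [← mul_rpow hr.le (by linarith), mul_one_sub, mul_div_cancel₀ _ hr.ne']

lemma mul_prod_range_le_of_mul_le_succ {R : Type*} [CommSemiring R] [PartialOrder R]
    [IsOrderedRing R] {c f : ℕ → R} {n : ℕ} (hf : ∀ i < n, 0 ≤ f i)
    (hstep : ∀ i < n, c i * f i ≤ c (i + 1)) :
    c 0 * ∏ i ∈ Finset.range n, f i ≤ c n := by
  induction n with
  | zero => simp
  | succ n ih =>
    rw [Finset.prod_range_succ, ← mul_assoc]
    calc c 0 * (∏ i ∈ Finset.range n, f i) * f n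
        ≤ c n * f n := by
          gcongr
          · exact hf n n.lt_succ_self
          · exact ih (fun i hi ↦ hf i (by omega)) (fun i hi ↦ hstep i (by omega))
      _ ≤ c (n + 1) := hstep n n.lt_succ_self

theorem uncovered_probability_bound_general (α : ℝ) (hα : 1 ≤ α) (ℓ : ℕ)
    (x : ℕ → ℝ)
    (r : ℕ → ℝ) (hr : ∀ i, r i = 1 - ∑ j ∈ Finset.range i, x j)
    (hrpos : ∀ i ≤ ℓ, 0 < r i) :
    ∏ i ∈ Finset.range ℓ, min (max ((r i / α - x i) / (r i / α)) 0) 1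
      ≤ (r ℓ) ^ α := by
  have hr_succ (i : ℕ) : r (i + 1) = r i - x i := by
    rw [hr, hr, Finset.sum_range_succ]; ring
  have hstep (i : ℕ) (hi : i < ℓ) :
      r i ^ α * min (max ((r i / α - x i) / (r i / α)) 0) 1 ≤ r (i + 1) ^ α := by
    have hxr : x i ≤ r i := by linarith [hr_succ i, hrpos (i + 1) hi]
    rw [hr_succ]
    exact rpow_mul_clock_failure_le hα (hrpos i hi.le) hxr
  have hr_zero : r 0 = 1 := by simp [hr]
  simpa [hr_zero] using mul_prod_range_le_of_mul_le_succ (c := fun i ↦ r i ^ α)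
    (fun i _ ↦ le_min (le_max_right _ _) zero_le_one) hstep

/-- Since the events are independent, the probability that all `ℓ` events fail is the
product of the individual failure probabilities
`min (max ((r i / α - x i) / (r i / α)) 0) 1`. -/
theorem uncovered_probability_bound (α : ℝ) (hα : 1 ≤ α) (ℓ : ℕ)
    (x : ℕ → ℝ) (hx : ∀ i, x i ∈ Set.Ico (0:ℝ) 1)
    (r : ℕ → ℝ) (hr : ∀ i, r i = 1 - ∑ j ∈ Finset.range i, x j)
    (hrpos : ∀ i ≤ ℓ, 0 < r i) :
    ∏ i ∈ Finset.range ℓ, min (max ((r i / α - x i) / (r i / α)) 0) 1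
      ≤ (r ℓ) ^ α :=
  uncovered_probability_bound_general α hα ℓ x r hr hrpos
end
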